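/- arXiv:1906.05266 — 2 statements merged into one kernel-verified Lean document; each statement's English description precedes it below -/
import Mathlib

section
/- Let S = S_0 ⇒ S_1 ⇒ … ⇒ S_k = T be a sequence of tandem duplications starting from an exemplar string S. Then for each i, the number of maximal (S, S_i)-stable substrings is at most 2i + 1. The inductive step: one tandem duplication increases the number of maximal stable substrings by at most 2. -/
open scoped Classical

variable {α : Type*}

/-- A single tandem duplication: `AXB ⇒ AXXB` with `X` nonempty. -/
def TDStep (S T : List α) : Prop :=
  ∃ A X B : List α, X ≠ [] ∧ S = A ++ X ++ B ∧ T = A ++ X ++ X ++ B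

/-- `TDk k S T`: `T` is obtained from `S` by exactly `k` tandem duplications. -/
def TDk : ℕ → List α → List α → Prop
  | 0, S, T => S = T
  | n+1, S, T => ∃ U, TDStep S U ∧ TDk n U T

/-- The tandem duplication distance, `⊤` if `T` is not reachable from `S`. -/
noncomputable def distTD (S T : List α) : ℕ∞ :=
  sInf {n : ℕ∞ | ∃ m : ℕ, n = m ∧ TDk m S T}

/-- The pair `xy` is stable in `T`: every occurrence of `x` in `T` is followed
by `y`, and every occurrence of `y` is preceded by `x`. -/
def StablePair (x y : α) (T : List α) : Prop :=
  (∀ A B : List α, T = A ++ x :: B → ∃ B', B = y :: B') ∧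
  (∀ A B : List α, T = A ++ y :: B → ∃ A', A = A' ++ [x])

/-- The maximal `(S,T)`-stable substrings of `S`, obtained by splitting `S` at
every consecutive pair that is not stable in `T`. -/
noncomputable def blocks (S T : List α) : List (List α) :=
  S.splitBy (fun a b => decide (StablePair a b T))

/-- The number of maximal `(S,T)`-stable substrings of a nonempty `S`: one more
than the number of consecutive pairs of `S` that are not stable in `T`. -/
noncomputable def numStable (S T : List α) : ℕ :=
  (blocks S T).length

/-!
The number of maximal stable substrings of `S` is one more than the number of consecutive pairs
of `S` that are unstable in `S_i`, and in `S` itself all of them are stable since its letters are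
distinct. A pair `xy` is stable in a string iff consecutive letters `p q` of the string satisfy
`p = x ↔ q = y` and the string neither ends in `x` nor starts with `y`. Duplicating `X` in `AXB`
creates only one new adjacency, (last letter of `X`, first letter of `X`), so a pair stable in
`AXB` stays stable in `AXXB` unless `x` is the last or `y` the first letter of `X`. As the letters
of `S` are distinct, at most one consecutive pair of `S` starts with the one and at most one ends
with the other.
-/

namespace List

theorem countP_or_le (p q : α → Bool) (l : List α) :
    l.countP (fun a => p a || q a) ≤ l.countP p + l.countP q := by
  induction l with
  | nil => simp
  | cons a l ih => cases hp : p a <;> cases hq : q a <;> simp [hp, hq] <;> omega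

theorem map_fst_zip_sublist {β : Type*} :
    ∀ (l : List α) (m : List β), (l.zip m).map Prod.fst <+ l
  | [], _ => by simp
  | _ :: _, [] => by simp
  | a :: l, _ :: m => by simpa using (map_fst_zip_sublist l m).cons_cons a

theorem map_snd_zip_sublist {β : Type*} :
    ∀ (l : List α) (m : List β), (l.zip m).map Prod.snd <+ m
  | [], _ => by simp
  | _ :: _, [] => by simp
  | _ :: l, b :: m => by simpa using (map_snd_zip_sublist l m).cons_cons b

theorem length_splitByLoop (r : α → α → Bool) (l : List α) (a : α) (g : List α)
    (gs : List (List α)) :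
    (splitBy.loop r l a g gs).length =
      gs.length + ((a :: l).zip l).countP (fun p => !r p.1 p.2) + 1 := by
  induction l generalizing a g gs with
  | nil => simp [splitBy.loop]
  | cons b l ih =>
    rw [splitBy.loop]
    cases h : r a b <;> simp [ih, h]
    omega

theorem length_splitBy (r : α → α → Bool) {l : List α} (hl : l ≠ []) :
    (l.splitBy r).length = (l.zip l.tail).countP (fun p => !r p.1 p.2) + 1 := by
  obtain ⟨a, l, rfl⟩ := exists_cons_of_ne_nil hl
  simp [splitBy, length_splitByLoop]

theorem Nodup.countP_zip_tail_le_add_two {l : List α} (hl : l.Nodup) {r r' : α → α → Bool}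
    {u v : α} (h : ∀ a b, r a b → a ≠ u → b ≠ v → r' a b) :
    (l.zip l.tail).countP (fun p => !r' p.1 p.2) ≤
      (l.zip l.tail).countP (fun p => !r p.1 p.2) + 2 := by
  have hfst : (l.zip l.tail).countP (fun p => p.1 == u) ≤ 1 := by
    have := ((map_fst_zip_sublist l l.tail).count_le u).trans (nodup_iff_count_le_one.mp hl u)
    rwa [count_eq_countP, countP_map] at this
  have hsnd : (l.zip l.tail).countP (fun p => p.2 == v) ≤ 1 := by
    have := ((map_snd_zip_sublist l l.tail).count_le v).trans
      (nodup_iff_count_le_one.mp ((tail_sublist l).nodup hl) v)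
    rwa [count_eq_countP, countP_map] at this
  calc (l.zip l.tail).countP (fun p => !r' p.1 p.2)
      ≤ (l.zip l.tail).countP (fun p => (!r p.1 p.2 || p.1 == u) || p.2 == v) := by
        refine countP_mono_left fun p _ hp => ?_
        by_contra hne
        simp_all
    _ ≤ (l.zip l.tail).countP (fun p => !r p.1 p.2) + 2 := by
        have := countP_or_le (fun p : α × α => !r p.1 p.2 || p.1 == u) (·.2 == v) (l.zip l.tail)
        have := countP_or_le (fun p : α × α => !r p.1 p.2) (·.1 == u) (l.zip l.tail)
        omega

end List

theorem stablePair_iff_isChain {x y : α} {T : List α} :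
    StablePair x y T ↔
      T.IsChain (fun p q => p = x ↔ q = y) ∧ x ∉ T.getLast? ∧ y ∉ T.head? := by
  rw [List.isChain_iff_forall_rel_of_append_cons_cons]
  constructor
  · rintro ⟨hx, hy⟩
    refine ⟨fun p q A B hT => ⟨?_, ?_⟩, fun hlast => ?_, fun hhead => ?_⟩
    · rintro rfl
      obtain ⟨B', hB'⟩ := hx A (q :: B) hT
      exact (List.cons.inj hB').1
    · rintro rfl
      obtain ⟨A', hA'⟩ := hy (A ++ [p]) B (by simpa using hT)
      exact List.singleton_inj.mp (List.append_inj' hA' rfl).2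
    · obtain ⟨A, hA⟩ := List.getLast?_eq_some_iff.mp (Option.mem_def.mp hlast)
      simpa using hx A [] (by simpa using hA)
    · obtain ⟨B, hB⟩ := List.head?_eq_some_iff.mp (Option.mem_def.mp hhead)
      simpa using hy [] B hB
  · rintro ⟨hchain, hlast, hhead⟩
    refine ⟨fun A B hT => ?_, fun A B hT => ?_⟩
    · rcases B with _ | ⟨q, B⟩
      · simp [hT] at hlast
      · obtain rfl := (hchain hT).mp rfl
        exact ⟨B, rfl⟩
    · rcases List.eq_nil_or_concat A with rfl | ⟨A, p, rfl⟩
      · simp [hT] at hhead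
      · obtain rfl := (hchain (by simpa using hT)).mpr rfl
        exact ⟨A, List.concat_eq_append⟩

theorem StablePair.of_nodup {S P Q : List α} {a b : α} (hS : S.Nodup)
    (h : S = P ++ a :: b :: Q) : StablePair a b S := by
  have hS' : S = P ++ [a] ++ b :: Q := by simpa using h
  have ha := not_or.mp (List.mem_append.not.mp
    (List.nodup_cons.mp (List.nodup_middle.mp (h ▸ hS))).1)
  have hb := not_or.mp (List.mem_append.not.mp
    (List.nodup_cons.mp (List.nodup_middle.mp (hS' ▸ hS))).1)
  refine ⟨fun A B hAB => ⟨Q, ?_⟩, fun A B hAB => ⟨P, ?_⟩⟩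
  · exact ((List.append_cons_inj_of_notMem ha.1 ha.2).mp (h.symm.trans hAB)).2.2.symm
  · exact ((List.append_cons_inj_of_notMem hb.1 hb.2).mp (hS'.symm.trans hAB)).1.symm

theorem StablePair.append_dup {x y : α} {A X B : List α} (hx : x ∉ X.getLast?)
    (hy : y ∉ X.head?) (h : StablePair x y (A ++ X ++ B)) :
    StablePair x y (A ++ X ++ X ++ B) := by
  by_cases hX : X = []
  · subst hX
    simpa using h
  obtain ⟨hchain, hlast, hhead⟩ := stablePair_iff_isChain.mp h
  refine stablePair_iff_isChain.mpr ⟨?_, ?_, ?_⟩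
  · have hAX : (A ++ X).IsChain _ := (List.isChain_append.mp hchain).1
    have hXB : (X ++ B).IsChain _ := (List.isChain_append.mp (by simpa using hchain)).2.1
    rw [show A ++ X ++ X ++ B = (A ++ X) ++ (X ++ B) by simp]
    refine List.isChain_append.mpr ⟨hAX, hXB, fun p hp q hq => ?_⟩
    rw [List.getLast?_append_of_ne_nil _ hX] at hp
    rw [List.head?_append_of_ne_nil _ hX] at hq
    exact iff_of_false (fun hpx => hx (hpx ▸ hp)) (fun hqy => hy (hqy ▸ hq))
  · simpa [List.getLast?_append, List.getLast?_eq_none_iff.not.mpr hX] using hlast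
  · simpa [List.head?_append, List.head?_eq_none_iff.not.mpr hX] using hhead

theorem numStable_self_le_one {S : List α} (hS : S.Nodup) : numStable S S ≤ 1 := by
  rcases eq_or_ne S [] with rfl | hne
  · simp [numStable, blocks]
  have hchain : S.IsChain fun a b => decide (StablePair a b S) = true :=
    List.isChain_iff_forall_rel_of_append_cons_cons.mpr fun _ _ _ _ h =>
      decide_eq_true (StablePair.of_nodup hS h)
  simp [numStable, blocks, List.splitBy_of_isChain hne hchain]

theorem TDStep.numStable_le {S T U : List α} (hS : S.Nodup) (h : TDStep T U) :
    numStable S U ≤ numStable S T + 2 := by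
  obtain ⟨A, X, B, hX, rfl, rfl⟩ := h
  rcases eq_or_ne S [] with rfl | hne
  · simp [numStable, blocks]
  rw [numStable, numStable, blocks, blocks, List.length_splitBy _ hne,
    List.length_splitBy _ hne]
  suffices ∀ p q, decide (StablePair p q (A ++ X ++ B)) → p ≠ X.getLast hX → q ≠ X.head hX →
      decide (StablePair p q (A ++ X ++ X ++ B)) by
    have := hS.countP_zip_tail_le_add_two this
    omega
  intro p q hpq hp hq
  rw [decide_eq_true_iff] at hpq ⊢
  refine hpq.append_dup ?_ ?_
  · simpa [List.getLast?_eq_some_getLast hX] using hp.symm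
  · simpa [List.head?_eq_some_head hX] using hq.symm

/-- Along a tandem duplication sequence `S = Seq 0 ⇒ ⋯ ⇒ Seq k = T` starting
from an exemplar string, the number of maximal `(S, Seq i)`-stable substrings
is at most `2i + 1`; one duplication increases this number by at most `2`. -/
theorem stmt13 (S : List α) (hS : S.Nodup) (k : ℕ) (Seq : ℕ → List α)
    (h0 : Seq 0 = S) (hstep : ∀ i < k, TDStep (Seq i) (Seq (i + 1))) :
    (∀ i ≤ k, numStable S (Seq i) ≤ 2 * i + 1) ∧
    (∀ i < k, numStable S (Seq (i + 1)) ≤ numStable S (Seq i) + 2) := by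
  have hinc : ∀ i < k, numStable S (Seq (i + 1)) ≤ numStable S (Seq i) + 2 :=
    fun i hi => (hstep i hi).numStable_le hS
  refine ⟨fun i hi => ?_, hinc⟩
  induction i with
  | zero => simpa [h0] using numStable_self_le_one hS
  | succ i ih =>
    have := hinc i hi
    have := ih (by omega)
    omega
end

section
/- Let S be exemplar with dist_TD(S, T) ≤ k, and let S', T' be obtained from S and T respectively by replacing each maximal (S,T)-stable substring by a single fresh character (the same character for all occurrences of the same maximal stable substring). Then dist_TD(S', T') ≤ k, |S'| ≤ 2k + 1, and |T'| ≤ (2k + 1)·2^k. -/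
open scoped Classical

variable {α : Type*}

/-!
A tandem duplication applied to a concatenation of blocks can be slid to the left until the
duplicated factor starts at a block boundary: if its first letter `x` has a stable predecessor `p`
in `S`, then the letter before the factor and the last letter of the factor both precede `x` in
`T`, so both equal `p`. A factor starting at a boundary also ends at one, so the step is a tandem
duplication of the word of block indices. Hence `T` is a concatenation of blocks and the whole
derivation contracts step by step; each step at most doubles the length.

A pair `xy` adjacent in `S` but not stable in `T` is witnessed by an adjacency `xz` or `zy` of `T`
that does not occur in `S`. Each duplication creates at most one new adjacency, and since `S` is
exemplar each new adjacency witnesses at most two such pairs, so `S` has at most `2k` block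
boundaries.
-/

theorem Finset.card_filter_mem_le_length {β γ : Type*} {s : Finset β} {f : β → γ}
    (hf : Set.InjOn f s) (L : List γ) : (s.filter (f · ∈ L)).card ≤ L.length :=
  (Finset.card_le_card_of_injOn f (fun _ hq => List.mem_toFinset.mpr (Finset.mem_filter.mp hq).2)
    (hf.mono (Finset.coe_subset.mpr (Finset.filter_subset _ _)))).trans (List.toFinset_card_le L)

namespace List

theorem pair_infix_append_iff {x y : α} {l₁ l₂ : List α} :
    [x, y] <:+: l₁ ++ l₂ ↔
      [x, y] <:+: l₁ ∨ [x, y] <:+: l₂ ∨ (l₁.getLast? = some x ∧ l₂.head? = some y) := by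
  rw [infix_append_iff, ← singleton_suffix_iff_getLast?_eq_some,
    ← singleton_prefix_iff_head?_eq_some]
  constructor
  · rintro (h | h | ⟨_ | ⟨a, _ | ⟨b, _ | _⟩⟩, l, he, h₁, h₂⟩)
    · exact .inl h
    · exact .inr (.inl h)
    · exact .inr (.inl (he ▸ h₂.isInfix))
    · simp only [cons_append, nil_append, cons.injEq] at he
      obtain ⟨rfl, rfl⟩ := he
      exact .inr (.inr ⟨h₁, h₂⟩)
    · simp only [cons_append, nil_append, cons.injEq] at he
      obtain ⟨rfl, rfl, -, rfl⟩ := he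
      exact .inl h₁.isInfix
    · simp at he
  · rintro (h | h | ⟨h₁, h₂⟩)
    · exact .inl h
    · exact .inr (.inl h)
    · exact .inr (.inr ⟨[x], [y], rfl, h₁, h₂⟩)

theorem pair_infix_iff_getElem? {x y : α} {l : List α} :
    [x, y] <:+: l ↔ ∃ i, l[i]? = some x ∧ l[i + 1]? = some y := by
  rw [infix_iff_getElem?]
  constructor
  · rintro ⟨k, -, h⟩
    exact ⟨k, by simpa using h 0 (by simp), by simpa [Nat.add_comm] using h 1 (by simp)⟩
  · rintro ⟨i, hx, hy⟩
    refine ⟨i, ?_, fun j hj => ?_⟩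
    · have := (getElem?_eq_some_iff.mp hy).1
      simp only [length_cons, length_nil]
      omega
    · obtain _ | _ | _ := j
      · simpa using hx
      · simpa [Nat.add_comm] using hy
      · simp at hj

theorem pair_infix_of_mem_zip_tail {x y : α} {l : List α} (h : (x, y) ∈ l.zip l.tail) :
    [x, y] <:+: l := by
  induction l with
  | nil => simp at h
  | cons a l ih =>
    obtain _ | ⟨b, l⟩ := l
    · simp at h
    · rw [tail_cons, zip_cons_cons, mem_cons] at h
      obtain h | h := h
      · simp only [Prod.mk.injEq] at h
        obtain ⟨rfl, rfl⟩ := h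
        exact (prefix_append [x, y] l).isInfix
      · exact infix_cons (ih h)

namespace Nodup

variable {l : List α} {x y z : α}

theorem eq_of_pair_infix_left (hl : l.Nodup) (h₁ : [x, y] <:+: l) (h₂ : [x, z] <:+: l) :
    y = z := by
  obtain ⟨i, hi, hy⟩ := pair_infix_iff_getElem?.mp h₁
  obtain ⟨j, hj, hz⟩ := pair_infix_iff_getElem?.mp h₂
  obtain rfl : i = j := (getElem?_inj (getElem?_eq_some_iff.mp hi).1 hl).mp (hi.trans hj.symm)
  simpa [hy] using hz

theorem eq_of_pair_infix_right (hl : l.Nodup) (h₁ : [x, z] <:+: l) (h₂ : [y, z] <:+: l) :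
    x = y := by
  obtain ⟨i, hx, hi⟩ := pair_infix_iff_getElem?.mp h₁
  obtain ⟨j, hy, hj⟩ := pair_infix_iff_getElem?.mp h₂
  obtain rfl : i = j := by
    have := (getElem?_inj (getElem?_eq_some_iff.mp hi).1 hl).mp (hi.trans hj.symm)
    omega
  simpa [hx] using hy

theorem head?_ne_of_pair_infix (hl : l.Nodup) (h : [x, y] <:+: l) : l.head? ≠ some y := by
  intro hd
  obtain ⟨i, -, hi⟩ := pair_infix_iff_getElem?.mp h
  rw [head?_eq_getElem?] at hd
  have := (getElem?_inj (getElem?_eq_some_iff.mp hi).1 hl).mp (hi.trans hd.symm)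
  omega

theorem getLast?_ne_of_pair_infix (hl : l.Nodup) (h : [x, y] <:+: l) : l.getLast? ≠ some x := by
  intro hd
  obtain ⟨i, hi, hy⟩ := pair_infix_iff_getElem?.mp h
  rw [getLast?_eq_getElem?] at hd
  have := (getElem?_inj (getElem?_eq_some_iff.mp hi).1 hl).mp (hi.trans hd.symm)
  have := (getElem?_eq_some_iff.mp hy).1
  omega

end Nodup

theorem splitBy_cons_cons_of_rel {r : α → α → Bool} {a b : α} {l g : List α} {G : List (List α)}
    (hab : r a b) (h : (b :: l).splitBy r = g :: G) :
    (a :: b :: l).splitBy r = (a :: g) :: G := by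
  obtain ⟨hflat, hnil, hchain, hjoin⟩ := splitBy_eq_iff.mp h
  have hg : g ≠ [] := fun hg => hnil (hg ▸ mem_cons_self)
  have hgb : g.head? = some b := by
    rw [flatten_cons] at hflat
    rw [← head?_append_of_ne_nil _ hg, ← hflat, head?_cons]
  rw [splitBy_eq_iff]
  refine ⟨by simp [hflat], ?_, ?_, ?_⟩
  · simpa using (not_or.mp (mt mem_cons.mpr hnil)).2
  · simp only [mem_cons, forall_eq_or_imp] at hchain ⊢
    exact ⟨isChain_cons.mpr ⟨fun y hy => by simp_all, hchain.1⟩, hchain.2⟩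
  · rw [isChain_cons] at hjoin ⊢
    refine ⟨fun y hy => ?_, hjoin.2⟩
    obtain ⟨_, hy', hry⟩ := hjoin.1 y hy
    exact ⟨cons_ne_nil _ _, hy', by rwa [getLast_cons hg]⟩

theorem length_splitBy_le (r : α → α → Bool) (l : List α) :
    (l.splitBy r).length ≤ ((l.zip l.tail).filter fun p => !r p.1 p.2).length + 1 := by
  induction l with
  | nil => simp
  | cons a l ih =>
    obtain _ | ⟨b, l⟩ := l
    · simp [splitBy_of_isChain]
    · have hcut : ((a :: b :: l).zip (b :: l)).filter (fun p => !r p.1 p.2) =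
          (if r a b then [] else [(a, b)]) ++ ((b :: l).zip l).filter (fun p => !r p.1 p.2) := by
        by_cases hab : r a b <;> simp [hab]
      rw [tail_cons, hcut]
      by_cases hab : r a b
      · obtain ⟨g, G, hgG⟩ := exists_cons_of_ne_nil (splitBy_ne_nil.mpr (cons_ne_nil b l))
        rw [splitBy_cons_cons_of_rel hab hgG]
        simpa [hab, hgG] using ih
      · rw [← singleton_append, splitBy_append_cons _ (by simpa using hab)]
        have ha : [a].splitBy r = [[a]] :=
          splitBy_of_isChain (cons_ne_nil a []) (isChain_singleton a)
        simp only [tail_cons] at ih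
        simp only [ha, hab, length_append, length_singleton, Bool.false_eq_true, if_false]
        omega

theorem Nodup.length_filter_zip_tail_le {l : List α} (hl : l.Nodup) (p : α × α → Bool)
    (L : List (α × α))
    (hL : ∀ q ∈ l.zip l.tail, p q → q.1 ∈ L.map Prod.fst ∨ q.2 ∈ L.map Prod.snd) :
    ((l.zip l.tail).filter p).length ≤ 2 * L.length := by
  have hF : ((l.zip l.tail).filter p).Nodup := by
    refine Nodup.filter _ (Nodup.of_map Prod.snd ?_)
    rw [map_snd_zip (by simp)]
    exact hl.sublist (tail_sublist l)
  set F := ((l.zip l.tail).filter p).toFinset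
  have hpair : ∀ q ∈ F, [q.1, q.2] <:+: l := fun q hq =>
    pair_infix_of_mem_zip_tail (mem_of_mem_filter (mem_toFinset.mp hq))
  have hfst : Set.InjOn Prod.fst (F : Set (α × α)) := by
    intro q hq q' hq' he
    have hq := hpair q hq
    rw [he] at hq
    exact Prod.ext he (hl.eq_of_pair_infix_left hq (hpair q' hq'))
  have hsnd : Set.InjOn Prod.snd (F : Set (α × α)) := by
    intro q hq q' hq' he
    have hq := hpair q hq
    rw [he] at hq
    exact Prod.ext (hl.eq_of_pair_infix_right hq (hpair q' hq')) he
  have hcover : F ⊆ F.filter (·.1 ∈ L.map Prod.fst) ∪ F.filter (·.2 ∈ L.map Prod.snd) := by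
    intro q hq
    have hq' := mem_filter.mp (mem_toFinset.mp hq)
    simpa [hq] using hL q hq'.1 hq'.2
  calc ((l.zip l.tail).filter p).length = F.card := (toFinset_card_of_nodup hF).symm
    _ ≤ (F.filter (·.1 ∈ L.map Prod.fst)).card + (F.filter (·.2 ∈ L.map Prod.snd)).card :=
      (Finset.card_le_card hcover).trans (Finset.card_union_le _ _)
    _ ≤ (L.map Prod.fst).length + (L.map Prod.snd).length :=
      add_le_add (Finset.card_filter_mem_le_length hfst _)
        (Finset.card_filter_mem_le_length hsnd _)
    _ = 2 * L.length := by simp only [length_map]; ring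

end List

theorem stablePair_iff {x y : α} {T : List α} :
    StablePair x y T ↔ (T.getLast? ≠ some x ∧ ∀ z, [x, z] <:+: T → z = y) ∧
      (T.head? ≠ some y ∧ ∀ z, [z, y] <:+: T → z = x) := by
  simp only [StablePair, ne_eq, ← List.singleton_suffix_iff_getLast?_eq_some,
    ← List.singleton_prefix_iff_head?_eq_some]
  constructor
  · rintro ⟨hsucc, hpred⟩
    refine ⟨⟨?_, ?_⟩, ?_, ?_⟩
    · rintro ⟨A, rfl⟩
      simpa using hsucc A [] rfl
    · rintro z ⟨A, B, rfl⟩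
      obtain ⟨B', hB'⟩ := hsucc A (z :: B) (by simp)
      exact (List.cons.inj hB').1
    · rintro ⟨B, rfl⟩
      simpa using hpred [] B rfl
    · rintro z ⟨A, B, rfl⟩
      obtain ⟨A', hA'⟩ := hpred (A ++ [z]) B (by simp)
      simpa using (List.append_inj' hA' rfl).2
  · rintro ⟨⟨hlast, hsucc⟩, hhead, hpred⟩
    refine ⟨fun A B hT => ?_, fun A B hT => ?_⟩
    · obtain _ | ⟨z, B'⟩ := B
      · exact absurd ⟨A, hT.symm⟩ hlast
      · exact ⟨B', by rw [hsucc z ⟨A, B', by simp [hT]⟩]⟩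
    · obtain rfl | ⟨A', z, rfl⟩ := A.eq_nil_or_concat
      · exact absurd ⟨B, hT.symm⟩ hhead
      · exact ⟨A', by rw [hpred z ⟨A', B, by simp [hT]⟩, List.concat_eq_append]⟩

namespace StablePair

variable {x y z : α} {T : List α}

theorem eq_of_pair_infix_left (h : StablePair x y T) (hz : [x, z] <:+: T) : z = y :=
  (stablePair_iff.mp h).1.2 z hz

theorem eq_of_pair_infix_right (h : StablePair x y T) (hz : [z, y] <:+: T) : z = x :=
  (stablePair_iff.mp h).2.2 z hz

end StablePair

namespace TDStep

variable {U V : List α}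

theorem head?_eq (h : TDStep U V) : V.head? = U.head? := by
  obtain ⟨A, X, B, hX, rfl, rfl⟩ := h
  obtain ⟨x, X, rfl⟩ := List.exists_cons_of_ne_nil hX
  simp [List.head?_append]

theorem getLast?_eq (h : TDStep U V) : V.getLast? = U.getLast? := by
  obtain ⟨A, X, B, hX, rfl, rfl⟩ := h
  simp [List.getLast?_append, List.getLast?_eq_some_getLast hX]

theorem length_le (h : TDStep U V) : V.length ≤ 2 * U.length := by
  obtain ⟨A, X, B, -, rfl, rfl⟩ := h
  simp only [List.length_append]
  omega

theorem pair_infix {x y : α} (h : TDStep U V) (hxy : [x, y] <:+: U) : [x, y] <:+: V := by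
  obtain ⟨A, X, B, hX, rfl, rfl⟩ := h
  rw [show A ++ X ++ X ++ B = (A ++ X) ++ (X ++ B) by simp]
  obtain hxy | hxy | ⟨hx, hy⟩ := List.pair_infix_append_iff.mp hxy
  · exact List.infix_append_of_infix_left hxy
  · exact List.infix_append_of_infix_right (List.infix_append_of_infix_right hxy)
  · refine List.infix_append_of_infix_right
      (List.pair_infix_append_iff.mpr (.inr (.inr ⟨?_, hy⟩)))
    simpa [List.getLast?_append, List.getLast?_eq_some_getLast hX] using hx

theorem exists_new_pair (h : TDStep U V) :
    ∃ p : α × α, ∀ x y, [x, y] <:+: V → [x, y] <:+: U ∨ (x, y) = p := by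
  obtain ⟨A, X, B, hX, rfl, rfl⟩ := h
  refine ⟨(X.getLast hX, X.head hX), fun x y hxy => ?_⟩
  rw [show A ++ X ++ X ++ B = (A ++ X) ++ (X ++ B) by simp] at hxy
  obtain hxy | hxy | ⟨hx, hy⟩ := List.pair_infix_append_iff.mp hxy
  · exact .inl (List.infix_append_of_infix_left hxy)
  · exact .inl (by simpa using List.infix_append_of_infix_right (l₂ := A) hxy)
  · right
    simp only [List.getLast?_append, List.getLast?_eq_some_getLast hX, Option.some_or,
      Option.some.injEq, List.head?_append, List.head?_eq_some_head hX] at hx hy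
    rw [hx, hy]

end TDStep

namespace TDk

variable {m : ℕ} {U V : List α}

theorem head?_eq (h : TDk m U V) : V.head? = U.head? := by
  induction m generalizing U with
  | zero => exact congrArg _ h.symm
  | succ n ih =>
    obtain ⟨W, hUW, hWV⟩ := h
    exact (ih hWV).trans hUW.head?_eq

theorem getLast?_eq (h : TDk m U V) : V.getLast? = U.getLast? := by
  induction m generalizing U with
  | zero => exact congrArg _ h.symm
  | succ n ih =>
    obtain ⟨W, hUW, hWV⟩ := h
    exact (ih hWV).trans hUW.getLast?_eq

theorem length_le (h : TDk m U V) : V.length ≤ U.length * 2 ^ m := by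
  induction m generalizing U with
  | zero => exact (congrArg _ h.symm).le.trans (by simp)
  | succ n ih =>
    obtain ⟨W, hUW, hWV⟩ := h
    calc V.length ≤ W.length * 2 ^ n := ih hWV
      _ ≤ 2 * U.length * 2 ^ n := Nat.mul_le_mul_right _ hUW.length_le
      _ = U.length * 2 ^ (n + 1) := by ring

theorem pair_infix {x y : α} (h : TDk m U V) (hxy : [x, y] <:+: U) : [x, y] <:+: V := by
  induction m generalizing U with
  | zero => exact h ▸ hxy
  | succ n ih =>
    obtain ⟨W, hUW, hWV⟩ := h
    exact ih hWV (hUW.pair_infix hxy)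

theorem exists_new_pairs (h : TDk m U V) :
    ∃ L : List (α × α), L.length ≤ m ∧
      ∀ x y, [x, y] <:+: V → [x, y] <:+: U ∨ (x, y) ∈ L := by
  induction m generalizing U with
  | zero => exact ⟨[], le_rfl, fun x y hxy => .inl (h ▸ hxy)⟩
  | succ n ih =>
    obtain ⟨W, hUW, hWV⟩ := h
    obtain ⟨L, hL, hnew⟩ := ih hWV
    obtain ⟨p, hp⟩ := hUW.exists_new_pair
    refine ⟨p :: L, by simpa using hL, fun x y hxy => ?_⟩
    obtain hW | hL := hnew x y hxy
    · exact (hp x y hW).imp_right fun he => by simp [he]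
    · exact .inr (List.mem_cons_of_mem p hL)

theorem distTD_le (h : TDk m U V) : distTD U V ≤ m :=
  sInf_le ⟨m, rfl, h⟩

end TDk

theorem exists_tdk_of_distTD_le {S T : List α} {k : ℕ} (h : distTD S T ≤ k) :
    ∃ m ≤ k, TDk m S T := by
  have hD : {n : ℕ∞ | ∃ m : ℕ, n = m ∧ TDk m S T}.Nonempty := by
    by_contra hD
    rw [Set.not_nonempty_iff_eq_empty] at hD
    rw [distTD, hD, sInf_empty, top_le_iff] at h
    exact ENat.natCast_ne_top k h
  obtain ⟨m, hm, hmT⟩ := csInf_mem hD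
  rw [distTD, hm] at h
  exact ⟨m, by exact_mod_cast h, hmT⟩

/-- Index `j` stands for the fresh character replacing the `j`-th block of `B`; indices out of
range spell the empty word. -/
def expand (B : List (List α)) (w : List ℕ) : List α :=
  w.flatMap fun j => B.getD j []

theorem expand_append (B : List (List α)) (P Q : List ℕ) :
    expand B (P ++ Q) = expand B P ++ expand B Q :=
  List.flatMap_append

theorem expand_cons (B : List (List α)) (j : ℕ) (w : List ℕ) :
    expand B (j :: w) = B.getD j [] ++ expand B w :=
  List.flatMap_cons

theorem expand_range_length (B : List (List α)) :
    expand B (List.range B.length) = B.flatten := by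
  rw [expand, List.flatMap_def]
  congr 1
  apply List.ext_getElem <;> simp +contextual

theorem getD_mem_of_ne_nil {B : List (List α)} {j : ℕ} (h : B.getD j [] ≠ []) :
    B.getD j [] ∈ B := by
  rw [List.getD_eq_getElem?_getD] at *
  cases hj : B[j]? with
  | none => simp [hj] at h
  | some b => simpa [hj] using List.mem_of_getElem? hj

section Blocks

variable {S T : List α}

def IsBlockHead (S T : List α) (d : α) : Prop :=
  ∀ p, [p, d] <:+: S → ¬StablePair p d T

theorem flatten_blocks (S T : List α) : (blocks S T).flatten = S :=
  List.flatten_splitBy _ S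

theorem not_isBlockHead_of_pair_infix_block {b : List α} (hb : b ∈ blocks S T) {c d : α}
    (hcd : [c, d] <:+: b) : ¬IsBlockHead S T d := by
  have hchain : [c, d].IsChain fun x y => StablePair x y T :=
    (by simpa using List.isChain_of_mem_splitBy hb : b.IsChain _).infix hcd
  have hbS : b <:+: S := flatten_blocks S T ▸ List.infix_of_mem_flatten hb
  exact fun hd => hd c (hcd.trans hbS)
    ((List.isChain_pair (R := fun x y => StablePair x y T)).mp hchain)

theorem isBlockHead_of_mem_blocks (hS : S.Nodup) {b : List α} (hb : b ∈ blocks S T) {d : α}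
    (hd : d ∈ b.head?) : IsBlockHead S T d := by
  obtain ⟨G₁, G₂, hG⟩ := List.append_of_mem hb
  obtain rfl | ⟨G₁, b₀, rfl⟩ := G₁.eq_nil_or_concat'
  · intro p hp
    refine absurd ?_ (hS.head?_ne_of_pair_infix hp)
    rw [← flatten_blocks S T, hG, List.nil_append, List.flatten_cons,
      List.head?_append_of_ne_nil _ (List.ne_nil_of_mem_splitBy hb)]
    exact hd
  · have hb₀ : b₀ ≠ [] := List.ne_nil_of_mem_splitBy (show b₀ ∈ blocks S T by simp [hG])
    have hjoin : [b₀, b] <:+: blocks S T := ⟨G₁, G₂, by simp [hG]⟩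
    obtain ⟨_, _, hunst⟩ :=
      List.isChain_pair.mp ((List.isChain_getLast_head_splitBy _ S).infix hjoin)
    have hpair : [b₀.getLast hb₀, d] <:+: S := by
      refine List.IsInfix.trans ?_ (flatten_blocks S T ▸ hjoin.flatten)
      simpa using List.pair_infix_append_iff.mpr
        (.inr (.inr ⟨List.getLast?_eq_some_getLast hb₀, hd⟩))
    intro p hp hst
    obtain rfl := hS.eq_of_pair_infix_right hp hpair
    rw [List.head_of_mem_head? hd, decide_eq_false_iff_not] at hunst
    exact hunst hst

theorem isBlockHead_of_mem_head?_expand (hS : S.Nodup) (w : List ℕ) :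
    ∀ d ∈ (expand (blocks S T) w).head?, IsBlockHead S T d := by
  induction w with
  | nil => simp [expand]
  | cons j w ih =>
    intro d hd
    rw [expand_cons] at hd
    by_cases hb : (blocks S T).getD j [] = []
    · exact ih d (by rwa [hb, List.nil_append] at hd)
    · refine isBlockHead_of_mem_blocks hS (getD_mem_of_ne_nil hb) ?_
      rwa [List.head?_append_of_ne_nil _ hb] at hd

theorem exists_split_of_append_eq_expand {D : List α}
    (hD : ∀ d ∈ D.head?, IsBlockHead S T d) (w : List ℕ) :
    ∀ C, C ++ D = expand (blocks S T) w →
      ∃ P Q, w = P ++ Q ∧ C = expand (blocks S T) P ∧ D = expand (blocks S T) Q := by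
  induction w with
  | nil =>
    intro C h
    obtain ⟨rfl, rfl⟩ := List.append_eq_nil_iff.mp h
    exact ⟨[], [], rfl, rfl, rfl⟩
  | cons j w ih =>
    intro C h
    rw [expand_cons] at h
    obtain ⟨a, hba, hDa⟩ | ⟨c, hCb, hc⟩ := List.append_eq_append_iff.mp h
    · obtain rfl | hC := eq_or_ne C []
      · exact ⟨[], j :: w, rfl, rfl, by rw [expand_cons]; simpa using h⟩
      obtain rfl | ha := eq_or_ne a []
      · exact ⟨[j], w, rfl, by rw [expand_cons, hba]; simp [expand], by simpa using hDa⟩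
      obtain ⟨d, a, rfl⟩ := List.exists_cons_of_ne_nil ha
      obtain ⟨C, c, rfl⟩ := C.eq_nil_or_concat'.resolve_left hC
      have hb : (blocks S T).getD j [] ∈ blocks S T := getD_mem_of_ne_nil (by rw [hba]; simp)
      exact absurd (hD d (by simp [hDa]))
        (not_isBlockHead_of_pair_infix_block hb (c := c) ⟨C, a, by rw [hba]; simp⟩)
    · obtain ⟨P, Q, rfl, rfl, rfl⟩ := ih c hc.symm
      exact ⟨j :: P, Q, rfl, by rw [hCb, expand_cons], rfl⟩

end Blocks

section Lifting

variable {S T : List α}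

theorem exists_rotation_isBlockHead {A X B : List α} (hX : X ≠ [])
    (hhead : ∀ d ∈ (A ++ X).head?, IsBlockHead S T d)
    (hT : ∀ x y, [x, y] <:+: A ++ X ++ X ++ B → [x, y] <:+: T) :
    ∃ A' Y B', A' ++ Y ++ B' = A ++ X ++ B ∧ A' ++ Y ++ Y ++ B' = A ++ X ++ X ++ B ∧
      ∃ y ∈ Y.head?, IsBlockHead S T y := by
  induction A using List.reverseRecOn generalizing X B with
  | nil =>
    refine ⟨[], X, B, rfl, rfl, X.head hX, List.head_mem_head? hX, hhead _ ?_⟩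
    simp [List.head?_eq_some_head hX]
  | append_singleton A a ih =>
    obtain ⟨x, X', hx⟩ := List.exists_cons_of_ne_nil hX
    by_cases hxb : IsBlockHead S T x
    · exact ⟨A ++ [a], X, B, rfl, rfl, x, by simp [hx], hxb⟩
    obtain ⟨p, -, hp⟩ : ∃ p, [p, x] <:+: S ∧ StablePair p x T := by
      simpa [IsBlockHead] using hxb
    obtain ⟨X₀, z, hz⟩ := X.eq_nil_or_concat'.resolve_left hX
    obtain rfl : a = p := hp.eq_of_pair_infix_right (hT a x ⟨A, X' ++ X ++ B, by simp [hx]⟩)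
    obtain rfl : z = a := hp.eq_of_pair_infix_right (hT z x ⟨A ++ [a] ++ X₀, X' ++ B, by
      nth_rw 1 [hz]; rw [hx]; simp⟩)
    obtain ⟨A', Y, B', hU, hV, hY⟩ := ih (X := z :: X₀) (B := z :: B) (List.cons_ne_nil _ _)
      (by simpa [List.head?_append] using hhead) (by simpa [hz] using hT)
    exact ⟨A', Y, B', by rw [hU, hz]; simp, by rw [hV, hz]; simp, hY⟩

theorem isBlockHead_of_square {Y B : List α} (hY : ∃ y ∈ Y.head?, IsBlockHead S T y)
    (hT : ∀ x y, [x, y] <:+: Y ++ Y ++ B → [x, y] <:+: T) :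
    ∀ d ∈ B.head?, IsBlockHead S T d := by
  obtain ⟨y, hy, hyb⟩ := hY
  -- the last letter `z` of `Y` precedes both `y` and `d` in `T`
  obtain ⟨Y', hY'⟩ := List.head?_eq_some_iff.mp hy
  obtain ⟨Y₀, z, hz⟩ := Y.eq_nil_or_concat'.resolve_left (by simp [hY'])
  intro d hd p hpd hst
  obtain ⟨B', hB'⟩ := List.head?_eq_some_iff.mp hd
  have hzd : [z, d] <:+: Y ++ (Y ++ B) :=
    List.infix_append_of_infix_right ⟨Y₀, B', by rw [hz, hB']; simp⟩
  have hzy : [z, y] <:+: Y ++ Y := by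
    have : [z, y] <:+: (Y₀ ++ [z]) ++ (y :: Y') := ⟨Y₀, Y', by simp⟩
    rwa [← hz, ← hY'] at this
  obtain rfl : z = p := hst.eq_of_pair_infix_right (hT z d (by rwa [List.append_assoc]))
  obtain rfl : y = d := hst.eq_of_pair_infix_left (hT z y (List.infix_append_of_infix_left hzy))
  exact hyb z hpd hst

theorem TDStep.exists_lift_expand (hS : S.Nodup) {U' : List ℕ} {V : List α}
    (h : TDStep (expand (blocks S T) U') V) (hT : ∀ x y, [x, y] <:+: V → [x, y] <:+: T) :
    ∃ V', TDStep U' V' ∧ V = expand (blocks S T) V' := by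
  obtain ⟨A, X, B, hX, hU, rfl⟩ := h
  have hhead : ∀ d ∈ (A ++ X).head?, IsBlockHead S T d := by
    intro d hd
    refine isBlockHead_of_mem_head?_expand hS U' d ?_
    rw [hU, List.head?_append_of_ne_nil _ (List.append_ne_nil_of_right_ne_nil A hX)]
    exact hd
  obtain ⟨A', Y, B', hU', hV', y, hy, hyb⟩ := exists_rotation_isBlockHead hX hhead hT
  rw [← hV'] at hT ⊢
  have hYne : Y ≠ [] := by
    rintro rfl
    simp at hy
  obtain ⟨P, Q₂, rfl, rfl, hQ₂⟩ := exists_split_of_append_eq_expand (D := Y ++ B')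
    (fun d hd => by
      rw [List.head?_append_of_ne_nil _ hYne] at hd
      exact Option.mem_unique hy hd ▸ hyb)
    U' A' (by rw [hU, ← hU', List.append_assoc])
  obtain ⟨Q, R, rfl, rfl, rfl⟩ := exists_split_of_append_eq_expand
    (isBlockHead_of_square ⟨y, hy, hyb⟩ fun x z hxz =>
      hT x z (hxz.trans ⟨expand (blocks S T) P, [], by simp⟩)) Q₂ Y hQ₂
  have hQ : Q ≠ [] := by
    rintro rfl
    simp [expand] at hy
  exact ⟨P ++ Q ++ Q ++ R, ⟨P, Q, R, hQ, by simp, rfl⟩, by simp [expand_append]⟩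

theorem TDk.exists_lift_expand (hS : S.Nodup) {m : ℕ} {U' : List ℕ}
    (h : TDk m (expand (blocks S T) U') T) :
    ∃ T', TDk m U' T' ∧ T = expand (blocks S T) T' := by
  induction m generalizing U' with
  | zero => exact ⟨U', rfl, h.symm⟩
  | succ n ih =>
    obtain ⟨V, hUV, hVT⟩ := h
    obtain ⟨V', hstep, rfl⟩ := hUV.exists_lift_expand hS fun x y hxy => hVT.pair_infix hxy
    obtain ⟨T', hT', hTe⟩ := ih hVT
    exact ⟨T', ⟨V', hstep, hT'⟩, hTe⟩

end Lifting

section Counting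

variable {S T : List α}

theorem mem_new_pairs_of_not_stablePair (hS : S.Nodup) {m : ℕ} (h : TDk m S T)
    {L : List (α × α)} (hL : ∀ x y, [x, y] <:+: T → [x, y] <:+: S ∨ (x, y) ∈ L)
    {a b : α} (hab : [a, b] <:+: S) (hst : ¬StablePair a b T) :
    a ∈ L.map Prod.fst ∨ b ∈ L.map Prod.snd := by
  simp only [stablePair_iff, not_and_or, not_forall, not_not, exists_prop] at hst
  obtain (hlast | ⟨c, hac, hcb⟩) | (hhead | ⟨c, hca, hcb⟩) := hst
  · exact absurd (h.getLast?_eq ▸ hlast) (hS.getLast?_ne_of_pair_infix hab)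
  · obtain hS' | hL' := hL a c hac
    · exact absurd (hS.eq_of_pair_infix_left hab hS').symm hcb
    · exact .inl (List.mem_map.mpr ⟨_, hL', rfl⟩)
  · exact absurd (h.head?_eq ▸ hhead) (hS.head?_ne_of_pair_infix hab)
  · obtain hS' | hL' := hL c b hca
    · exact absurd (hS.eq_of_pair_infix_right hab hS').symm hcb
    · exact .inr (List.mem_map.mpr ⟨_, hL', rfl⟩)

theorem length_blocks_le (hS : S.Nodup) {m : ℕ} (h : TDk m S T) :
    (blocks S T).length ≤ 2 * m + 1 := by
  obtain ⟨L, hLm, hL⟩ := h.exists_new_pairs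
  have hcuts := hS.length_filter_zip_tail_le (fun q => !decide (StablePair q.1 q.2 T)) L
    fun q hq hst => mem_new_pairs_of_not_stablePair hS h hL (List.pair_infix_of_mem_zip_tail hq)
      (by simpa using hst)
  have := List.length_splitBy_le (fun a b => decide (StablePair a b T)) S
  rw [← blocks] at this
  omega

end Counting

/-- Kernelization: replacing each maximal `(S,T)`-stable substring by a single
fresh character (here: its index in `blocks S T`) turns `S` into
`S' = [0, 1, …, l-1]` and `T` into a string `T'` of block indices whose
expansion is `T`, with `dist_TD(S',T') ≤ k`, `|S'| ≤ 2k + 1` and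
`|T'| ≤ (2k + 1)·2^k`. -/
theorem stmt14 (S T : List α) (hS : S.Nodup) (k : ℕ)
    (h : distTD S T ≤ (k : ℕ∞)) :
    ∃ T' : List ℕ,
      T'.flatMap (fun j => (blocks S T).getD j []) = T ∧
      distTD (List.range (blocks S T).length) T' ≤ (k : ℕ∞) ∧
      (List.range (blocks S T).length).length ≤ 2 * k + 1 ∧
      T'.length ≤ (2 * k + 1) * 2 ^ k := by
  obtain ⟨m, hmk, hST⟩ := exists_tdk_of_distTD_le h
  have hS' : expand (blocks S T) (List.range (blocks S T).length) = S := by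
    rw [expand_range_length, flatten_blocks]
  obtain ⟨T', hT', hTe⟩ := TDk.exists_lift_expand hS (hS' ▸ hST)
  have hlen := length_blocks_le hS hST
  refine ⟨T', hTe.symm, hT'.distTD_le.trans (by exact_mod_cast hmk),
    by simp only [List.length_range]; omega, ?_⟩
  calc T'.length ≤ (blocks S T).length * 2 ^ m := by simpa using hT'.length_le
    _ ≤ (2 * k + 1) * 2 ^ k := Nat.mul_le_mul (by omega) (Nat.pow_le_pow_right two_pos hmk)
end
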